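/- arXiv:solv-int/9703012 — 5 statements merged into one kernel-verified Lean document; each statement's English description precedes it below -/
import Mathlib

section
/- With Ω the 2-form defined from vector fields u, B and scalar φ on ℝ⁴ as Ω = -(∇φ + u×B)·dx ∧ dt + B·(dx∧dx), one has the identity (1/2) Ω ∧ Ω = -(B·∇φ) dx ∧ dy ∧ dz ∧ dt. In particular Ω is nondegenerate (symplectic, given it is closed) at a point if and only if B·∇φ ≠ 0 there. -/
noncomputable section
open scoped BigOperators

/-- ℝ³ as `Fin 3 → ℝ`. -/
abbrev V3 : Type := Fin 3 → ℝ
/-- space-time point `(t, x)` in `ℝ × ℝ³`. -/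
abbrev Pt : Type := ℝ × V3

/-- time partial derivative `∂f/∂t`. -/
def pdt (f : Pt → ℝ) (p : Pt) : ℝ := fderiv ℝ f p (1, 0)
/-- spatial partial derivative `∂f/∂xᵢ`. -/
def pdx (i : Fin 3) (f : Pt → ℝ) (p : Pt) : ℝ := fderiv ℝ f p (0, Pi.single i 1)
/-- spatial gradient `∇f`. -/
def grad (f : Pt → ℝ) (p : Pt) : V3 := fun i => pdx i f p
/-- spatial divergence `∇·u`. -/
def vdiv (u : Pt → V3) (p : Pt) : ℝ := ∑ i, pdx i (fun q => u q i) p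
/-- spatial curl `∇×u`. -/
def curl (u : Pt → V3) (p : Pt) : V3 :=
  ![pdx 1 (fun q => u q 2) p - pdx 2 (fun q => u q 1) p,
    pdx 2 (fun q => u q 0) p - pdx 0 (fun q => u q 2) p,
    pdx 0 (fun q => u q 1) p - pdx 1 (fun q => u q 0) p]
/-- cross product in ℝ³. -/
def cross (a b : V3) : V3 :=
  ![a 1 * b 2 - a 2 * b 1, a 2 * b 0 - a 0 * b 2, a 0 * b 1 - a 1 * b 0]
/-- dot product in ℝ³. -/
def dot (a b : V3) : ℝ := ∑ i, a i * b i
/-- directional derivative `(a·∇)b`. -/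
def adv (a b : Pt → V3) (p : Pt) : V3 := fun i => ∑ j, a p j * pdx j (fun q => b q i) p
/-- Lie bracket of (time-dependent) vector fields on ℝ³: `[a,b] = (a·∇)b - (b·∇)a`. -/
def brkt (a b : Pt → V3) : Pt → V3 := fun p i => adv a b p i - adv b a p i
/-- material derivative `∂f/∂t + u·∇f`. -/
def matD (u : Pt → V3) (f : Pt → ℝ) (p : Pt) : ℝ := pdt f p + ∑ i, u p i * pdx i f p

/-- coordinate directions on space-time ℝ⁴ = ℝ × ℝ³ : (t,x,y,z). -/
def e4 : Fin 4 → Pt := ![((1:ℝ), 0), (0, Pi.single 0 1), (0, Pi.single 1 1), (0, Pi.single 2 1)]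
/-- partial derivative along the μ-th coordinate of space-time. -/
def D4 (μ : Fin 4) (f : Pt → ℝ) (p : Pt) : ℝ := fderiv ℝ f p (e4 μ)

/-- The coefficient matrix `Ω_{μν}` (in the basis `dx^μ ∧ dx^ν`, `x⁰ = t`) of the 2-form
`Ω = -G·dx ∧ dt + B·(dx∧dx)`, i.e. `Ω = G_i dt∧dx^i + B₁ dy∧dz + B₂ dz∧dx + B₃ dx∧dy`. -/
def Omega2 (G B : Pt → V3) : Fin 4 → Fin 4 → Pt → ℝ :=
  ![![fun _ => 0,        fun p => G p 0,    fun p => G p 1,    fun p => G p 2],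
    ![fun p => -G p 0,   fun _ => 0,        fun p => B p 2,    fun p => -B p 1],
    ![fun p => -G p 1,   fun p => -B p 2,   fun _ => 0,        fun p => B p 0],
    ![fun p => -G p 2,   fun p => B p 1,    fun p => -B p 0,   fun _ => 0]]

/-! The coefficient matrix of `Ω` is skew-symmetric, so its determinant is the square of its
Pfaffian, and the Pfaffian of `Omega2 G B` is `B·G`. For `G = ∇φ + u×B` the triple product
`B·(u×B)` vanishes, leaving `B·∇φ`. -/

open Matrix

theorem cross_eq_crossProduct (a b : V3) : cross a b = a ⨯₃ b :=
  (cross_apply a b).symm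

theorem dot_eq_dotProduct (a b : V3) : dot a b = a ⬝ᵥ b :=
  rfl

theorem Matrix.det_fin_four_of_skew {R : Type*} [CommRing R] (A : Matrix (Fin 4) (Fin 4) R)
    (hskew : ∀ i j, A j i = -A i j) (hdiag : ∀ i, A i i = 0) :
    A.det = (A 0 1 * A 2 3 - A 0 2 * A 1 3 + A 0 3 * A 1 2) ^ 2 := by
  simp [det_succ_row_zero, Fin.sum_univ_succ, Fin.succAbove, hdiag, hskew 0 1, hskew 0 2,
    hskew 0 3, hskew 1 2, hskew 1 3, hskew 2 3]
  ring

section Omega2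

variable (G B : Pt → V3) (p : Pt)

theorem Omega2_swap (μ ν : Fin 4) : Omega2 G B ν μ p = -Omega2 G B μ ν p := by
  fin_cases μ <;> fin_cases ν <;> simp [Omega2]

theorem Omega2_self (μ : Fin 4) : Omega2 G B μ μ p = 0 := by
  fin_cases μ <;> rfl

theorem Omega2_pfaffian :
    Omega2 G B 0 1 p * Omega2 G B 2 3 p - Omega2 G B 0 2 p * Omega2 G B 1 3 p
      + Omega2 G B 0 3 p * Omega2 G B 1 2 p = dot (B p) (G p) := by
  simp only [Omega2, dot, Fin.sum_univ_three, cons_val', cons_val_zero, cons_val_one,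
    cons_val_fin_one, cons_val]
  ring

theorem Omega2_det : (Matrix.of fun μ ν => Omega2 G B μ ν p).det = dot (B p) (G p) ^ 2 := by
  rw [det_fin_four_of_skew (Matrix.of fun μ ν => Omega2 G B μ ν p) (Omega2_swap G B p)
    (Omega2_self G B p)]
  exact congrArg (· ^ 2) (Omega2_pfaffian G B p)

end Omega2

/-- The coefficient of `(1/2) Ω ∧ Ω` on `dt∧dx∧dy∧dz = -(dx∧dy∧dz∧dt)` is the Pfaffian
`Ω₀₁Ω₂₃ - Ω₀₂Ω₁₃ + Ω₀₃Ω₁₂`, so the first conjunct is the identity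
`(1/2) Ω ∧ Ω = -(B·∇φ) dx∧dy∧dz∧dt`. -/
theorem Omega_wedge_Omega_eq_potential_vorticity
    (u B : Pt → V3) (φ : Pt → ℝ) :
    ∀ p : Pt,
      (Omega2 (fun q => grad φ q + cross (u q) (B q)) B 0 1 p
          * Omega2 (fun q => grad φ q + cross (u q) (B q)) B 2 3 p
        - Omega2 (fun q => grad φ q + cross (u q) (B q)) B 0 2 p
          * Omega2 (fun q => grad φ q + cross (u q) (B q)) B 1 3 p
        + Omega2 (fun q => grad φ q + cross (u q) (B q)) B 0 3 p
          * Omega2 (fun q => grad φ q + cross (u q) (B q)) B 1 2 p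
        = dot (B p) (grad φ p))
      ∧ ((Matrix.det (Matrix.of fun μ ν : Fin 4 =>
            Omega2 (fun q => grad φ q + cross (u q) (B q)) B μ ν p) ≠ 0)
          ↔ dot (B p) (grad φ p) ≠ 0) := by
  intro p
  have hdot : dot (B p) (grad φ p + cross (u p) (B p)) = dot (B p) (grad φ p) := by
    rw [dot_eq_dotProduct, dot_eq_dotProduct, cross_eq_crossProduct, dotProduct_add,
      dot_cross_self, add_zero]
  refine ⟨by rw [Omega2_pfaffian, hdot], ?_⟩
  rw [Omega2_det, hdot]
  exact pow_ne_zero_iff two_ne_zero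
end
end

section
/- Let Ω = -(∇φ + u×B)·dx ∧ dt + B·(dx∧dx) be the 2-form on ℝ⁴ and let X = ∂/∂t + u·∇ be the suspended velocity vector field. Then the interior product i(X)Ω equals dφ, i.e., X is the Hamiltonian vector field of the function φ with respect to Ω, provided ∂φ/∂t + u·∇φ = 0. -/
noncomputable section
open scoped BigOperators

/-- the suspended velocity field `X = ∂/∂t + u·∇`, with components
`(1,u₁,u₂,u₃)`, satisfies `i(X)Ω = dφ` for `Ω = -(∇φ + u×B)·dx ∧ dt + B·(dx∧dx)`,
provided `∂φ/∂t + u·∇φ = 0`: the `ν`-component of `i(X)Ω`, namely `∑_μ X^μ Ω_{μν}`,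
equals the `ν`-component `∂_ν φ` of `dφ`. -/
theorem suspended_field_is_Hamiltonian
    (u B : Pt → V3) (φ : Pt → ℝ)
    (hu : ContDiff ℝ (⊤ : ℕ∞) u) (hB : ContDiff ℝ (⊤ : ℕ∞) B) (hφ : ContDiff ℝ (⊤ : ℕ∞) φ)
    (hadvφ : ∀ p, matD u φ p = 0) :
    ∀ (p : Pt) (ν : Fin 4),
      ∑ μ : Fin 4, (![1, u p 0, u p 1, u p 2] : Fin 4 → ℝ) μ
          * Omega2 (fun q => grad φ q + cross (u q) (B q)) B μ ν p
        = D4 ν φ p := by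
  intro p ν
  have h := hadvφ p
  simp only [matD, Fin.sum_univ_three, pdt, pdx] at h
  fin_cases ν <;>
    simp [Omega2, e4, D4, grad, cross, pdt, pdx, Fin.sum_univ_four] <;>
    first
    | linear_combination -h
    | ring
end
end

section
/- Suppose u solves the rotational Euler equation ∂u/∂t - u × (∇×u) = -∇(P/ρ + |u|²/2) on ℝ × ℝ³ with w = ∇×u, and φ = h satisfies ∂h/∂t + u·∇h = 0. Then the 2-form Ω_e = -(∇h + u×w)·dx ∧ dt + w·(dx∧dx) is exact: Ω_e = -dθ_e where θ_e = -ψ_e dt - u·dx and ψ_e = -(h + P/ρ + |u|²/2). -/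
noncomputable section
open scoped BigOperators

set_option maxHeartbeats 2000000 in
/-- if `u` solves the rotational Euler equation
`∂u/∂t - u×(∇×u) = -∇(P/ρ + |u|²/2)` (with `Q := P/ρ` a single smooth function) and
`h` is advected, then `Ω_e = -(∇h + u×w)·dx ∧ dt + w·(dx∧dx)` (with `w = ∇×u`) is exact:
`Ω_e = -dθ_e` where `θ_e = (h + P/ρ + |u|²/2) dt - u·dx`, i.e. componentwise
`(Ω_e)_{μν} = -(∂_μ (θ_e)_ν - ∂_ν (θ_e)_μ)`. -/
theorem Omega_e_exact
    (u : Pt → V3) (Q h : Pt → ℝ)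
    (hu : ContDiff ℝ (⊤ : ℕ∞) u) (hQ : ContDiff ℝ (⊤ : ℕ∞) Q) (hh : ContDiff ℝ (⊤ : ℕ∞) h)
    (hEuler : ∀ p i, pdt (fun q => u q i) p - cross (u p) (curl u p) i
        = -(pdx i (fun q => Q q + dot (u q) (u q) / 2) p))
    (hadvh : ∀ p, matD u h p = 0) :
    ∀ (p : Pt) (μ ν : Fin 4),
      Omega2 (fun q => grad h q + cross (u q) (curl u q)) (curl u) μ ν p
        = -(D4 μ ((![fun q => h q + Q q + dot (u q) (u q) / 2,
                     fun q => -(u q 0), fun q => -(u q 1), fun q => -(u q 2)] :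
                     Fin 4 → Pt → ℝ) ν) p
            - D4 ν ((![fun q => h q + Q q + dot (u q) (u q) / 2,
                     fun q => -(u q 0), fun q => -(u q 1), fun q => -(u q 2)] :
                     Fin 4 → Pt → ℝ) μ) p) := by
  intro p μ ν
  have hud : Differentiable ℝ u := hu.differentiable (by simp)
  have hui : ∀ i, Differentiable ℝ fun q => u q i := fun i => (differentiable_pi.mp hud) i
  have hF : Differentiable ℝ (fun q => Q q + dot (u q) (u q) / 2) := by
    have hdot : Differentiable ℝ fun q => dot (u q) (u q) := by
      simp only [dot]
      exact Differentiable.fun_sum fun i _ => (hui i).mul (hui i)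
    have h2 : Differentiable ℝ (fun q => dot (u q) (u q) / 2) := by
      simp only [div_eq_mul_inv]
      exact hdot.mul_const _
    exact (hQ.differentiable (by simp)).add h2
  have hneg : ∀ (i : Fin 3) (v : Pt), fderiv ℝ (fun q => -(u q i)) p v
      = -(fderiv ℝ (fun q => u q i) p v) := by
    intro i v; rw [fderiv_fun_neg]; simp
  have hsum : ∀ v : Pt, fderiv ℝ (fun q => h q + Q q + dot (u q) (u q) / 2) p v
      = fderiv ℝ h p v + fderiv ℝ (fun q => Q q + dot (u q) (u q) / 2) p v := by
    intro v
    have e : (fun q => h q + Q q + dot (u q) (u q) / 2)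
        = fun q => h q + (Q q + dot (u q) (u q) / 2) := by funext q; ring
    rw [e, fderiv_fun_add ((hh.differentiable (by simp)) p) (hF p)]; simp
  have key : ∀ i : Fin 3, fderiv ℝ (fun q => u q i) p (1, 0)
      = cross (u p) (curl u p) i
        - fderiv ℝ (fun q => Q q + dot (u q) (u q) / 2) p (0, Pi.single i 1) := by
    intro i
    have := hEuler p i
    simp only [pdt, pdx] at this
    linarith
  fin_cases μ <;> fin_cases ν <;>
    simp [Omega2, D4, e4, grad, pdx, curl, cross, hneg, hsum] <;>
    first
      | ring1
      | (rw [key]; simp only [cross, curl, pdx, Matrix.cons_val_zero, Matrix.cons_val_one,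
          Matrix.head_cons, Matrix.cons_val_two, Matrix.tail_cons, Matrix.cons_val_three,
          Fin.isValue]; ring1)
end
end

section
/- If u and B are smooth time-dependent vector fields on ℝ³ with ∇·B = 0 and satisfying the frozen-field equation ∂B/∂t = ∇×(u×B), and φ satisfies ∂φ/∂t + u·∇φ = 0, then the potential 'vorticity' ρ_φ := -B·∇φ satisfies the continuity equation ∂ρ_φ/∂t + ∇·(ρ_φ u) = 0. -/
noncomputable section
open scoped BigOperators

def D (v : Pt) (f : Pt → ℝ) (p : Pt) : ℝ := fderiv ℝ f p v

lemma pdt_eq (f : Pt → ℝ) : pdt f = D ((1:ℝ), (0:V3)) f := rfl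
lemma pdx_eq (i : Fin 3) (f : Pt → ℝ) : pdx i f = D ((0:ℝ), Pi.single i (1:ℝ)) f := rfl

lemma smooth_D {f : Pt → ℝ} (hf : ContDiff ℝ (⊤ : ℕ∞) f) (v : Pt) :
    ContDiff ℝ (⊤ : ℕ∞) (fun q => D v f q) :=
  (hf.fderiv_right (by simp)).clm_apply contDiff_const

lemma D_add {p : Pt} {f g : Pt → ℝ} (hf : DifferentiableAt ℝ f p) (hg : DifferentiableAt ℝ g p) (v : Pt) :
    D v (fun q => f q + g q) p = D v f p + D v g p := by
  simp [D, fderiv_fun_add hf hg]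

lemma D_sub {p : Pt} {f g : Pt → ℝ} (hf : DifferentiableAt ℝ f p) (hg : DifferentiableAt ℝ g p) (v : Pt) :
    D v (fun q => f q - g q) p = D v f p - D v g p := by
  simp [D, fderiv_fun_sub hf hg]

lemma D_neg {f : Pt → ℝ} (v p : Pt) :
    D v (fun q => -f q) p = -D v f p := by
  simp [D, fderiv_neg]

lemma D_mul {p : Pt} {f g : Pt → ℝ} (hf : DifferentiableAt ℝ f p) (hg : DifferentiableAt ℝ g p) (v : Pt) :
    D v (fun q => f q * g q) p = D v f p * g p + f p * D v g p := by
  simp [D, fderiv_fun_mul hf hg]; ring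

lemma D_swap {f : Pt → ℝ} (hf : ContDiff ℝ (⊤ : ℕ∞) f) (v w : Pt) (p : Pt) :
    D w (fun q => D v f q) p = D v (fun q => D w f q) p := by
  have hd : ContDiff ℝ (⊤ : ℕ∞) (fderiv ℝ f) := hf.fderiv_right (by simp)
  have h1 : ∀ v : Pt, fderiv ℝ (fun q => fderiv ℝ f q v) p = (fderiv ℝ (fderiv ℝ f) p).flip v := by
    intro v
    rw [fderiv_clm_apply (hd.differentiable (by simp)).differentiableAt (differentiableAt_const v)]
    simp
  have hsym := second_derivative_symmetric (f' := fderiv ℝ f) (f'' := fderiv ℝ (fderiv ℝ f) p)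
    (fun y => ((hf.differentiable (by simp)).differentiableAt).hasFDerivAt)
    ((hd.differentiable (by simp)).differentiableAt.hasFDerivAt) v w
  simp only [D, h1, ContinuousLinearMap.flip_apply]
  exact hsym.symm

/-- if `∇·B = 0`, `∂B/∂t = ∇×(u×B)` and `∂φ/∂t + u·∇φ = 0`, then the
potential vorticity `ρ_φ = -B·∇φ` satisfies the continuity equation
`∂ρ_φ/∂t + ∇·(ρ_φ u) = 0`. -/
theorem potential_vorticity_continuity
    (u B : Pt → V3) (φ : Pt → ℝ)
    (hu : ContDiff ℝ (⊤ : ℕ∞) u) (hB : ContDiff ℝ (⊤ : ℕ∞) B) (hφ : ContDiff ℝ (⊤ : ℕ∞) φ)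
    (hdivB : ∀ p, vdiv B p = 0)
    (hfrozen : ∀ p i, pdt (fun q => B q i) p = curl (fun q => cross (u q) (B q)) p i)
    (hadvφ : ∀ p, matD u φ p = 0) :
    ∀ p : Pt,
      pdt (fun q => -(dot (B q) (grad φ q))) p
        + vdiv (fun q => fun i => -(dot (B q) (grad φ q)) * u q i) p = 0 := by
  intro p
  have hui : ∀ i, Differentiable ℝ (fun q => u q i) := fun i => (contDiff_pi.mp hu i).differentiable (by simp)
  have hBi : ∀ i, Differentiable ℝ (fun q => B q i) := fun i => (contDiff_pi.mp hB i).differentiable (by simp)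
  have hDφ : ∀ v : Pt, Differentiable ℝ (fun q => D v φ q) := fun v => (smooth_D hφ v).differentiable (by simp)
  have hφd : Differentiable ℝ φ := hφ.differentiable (by simp)
  have h0 := hui 0; have h1 := hui 1; have h2 := hui 2
  have hb0 := hBi 0; have hb1 := hBi 1; have hb2 := hBi 2
  have hd0 := hDφ ((0:ℝ), Pi.single (0:Fin 3) (1:ℝ))
  have hd1 := hDφ ((0:ℝ), Pi.single (1:Fin 3) (1:ℝ))
  have hd2 := hDφ ((0:ℝ), Pi.single (2:Fin 3) (1:ℝ))
  have hdt := hDφ ((1:ℝ), (0:V3))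
  -- divergence-free B at p
  have hdiv := hdivB p
  simp only [vdiv, Fin.sum_univ_three, pdx_eq] at hdiv
  -- frozen field equations at p
  have hf0 := hfrozen p 0
  have hf1 := hfrozen p 1
  have hf2 := hfrozen p 2
  simp (disch := first | assumption | fun_prop) only
    [curl, cross, Matrix.cons_val_zero, Matrix.cons_val_one, Matrix.head_cons,
     Matrix.cons_val_two, Matrix.tail_cons, pdt_eq, pdx_eq, D_add, D_sub, D_neg, D_mul]
    at hf0 hf1 hf2
  -- spatial derivatives of the advection equation for φ
  have hE4 : ∀ i : Fin 3,
      D ((0:ℝ), Pi.single i (1:ℝ))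
        (fun q => pdt φ q + ∑ j, u q j * pdx j φ q) p = 0 := by
    intro i
    have hF : (fun q => pdt φ q + ∑ j, u q j * pdx j φ q) = fun _ => (0:ℝ) :=
      funext fun q => hadvφ q
    rw [hF]
    simp [D]
  have hE40 := hE4 0; have hE41 := hE4 1; have hE42 := hE4 2
  simp (disch := first | assumption | fun_prop) only
    [Fin.sum_univ_three, pdt_eq, pdx_eq, D_add, D_sub, D_neg, D_mul]
    at hE40 hE41 hE42
  -- Clairaut symmetry instances
  have St0 := D_swap hφ ((1:ℝ), (0:V3)) ((0:ℝ), Pi.single (0:Fin 3) (1:ℝ)) p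
  have St1 := D_swap hφ ((1:ℝ), (0:V3)) ((0:ℝ), Pi.single (1:Fin 3) (1:ℝ)) p
  have St2 := D_swap hφ ((1:ℝ), (0:V3)) ((0:ℝ), Pi.single (2:Fin 3) (1:ℝ)) p
  have S01 := D_swap hφ ((0:ℝ), Pi.single (0:Fin 3) (1:ℝ)) ((0:ℝ), Pi.single (1:Fin 3) (1:ℝ)) p
  have S02 := D_swap hφ ((0:ℝ), Pi.single (0:Fin 3) (1:ℝ)) ((0:ℝ), Pi.single (2:Fin 3) (1:ℝ)) p
  have S12 := D_swap hφ ((0:ℝ), Pi.single (1:Fin 3) (1:ℝ)) ((0:ℝ), Pi.single (2:Fin 3) (1:ℝ)) p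
  -- expand the goal
  simp (disch := first | assumption | fun_prop) only
    [dot, grad, vdiv, Fin.sum_univ_three, pdt_eq, pdx_eq, D_add, D_sub, D_neg, D_mul]
  linear_combination
    (-(D ((0:ℝ), Pi.single (0:Fin 3) (1:ℝ)) φ p)) * hf0
    + (-(D ((0:ℝ), Pi.single (1:Fin 3) (1:ℝ)) φ p)) * hf1
    + (-(D ((0:ℝ), Pi.single (2:Fin 3) (1:ℝ)) φ p)) * hf2
    + (-(B p 0)) * hE40 + (-(B p 1)) * hE41 + (-(B p 2)) * hE42
    + (-(u p 0 * D ((0:ℝ), Pi.single (0:Fin 3) (1:ℝ)) φ p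
        + u p 1 * D ((0:ℝ), Pi.single (1:Fin 3) (1:ℝ)) φ p
        + u p 2 * D ((0:ℝ), Pi.single (2:Fin 3) (1:ℝ)) φ p)) * hdiv
    + (B p 0) * St0 + (B p 1) * St1 + (B p 2) * St2
    + (u p 0 * B p 1 - B p 0 * u p 1) * S01
    + (u p 0 * B p 2 - B p 0 * u p 2) * S02
    + (u p 1 * B p 2 - B p 1 * u p 2) * S12
end
end

section
/- Let u be a smooth time-dependent vector field on ℝ³ whose dynamics satisfies ∂u/∂t + (u·∇)u = F, and let v be a time-dependent symmetry of u satisfying ∂v/∂t + [u,v] = 0. If v·(F + ∇(|u|²/2)) = 0 everywhere, then u·v is a Lagrangian invariant: ∂(u·v)/∂t + u·∇(u·v) = 0. -/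
noncomputable section
open scoped BigOperators

section AuxDotSym

lemma pd_dot_apply (u v : Pt → V3) (hu : ContDiff ℝ (⊤ : ℕ∞) u) (hv : ContDiff ℝ (⊤ : ℕ∞) v)
    (p : Pt) (w : ℝ × V3) :
    fderiv ℝ (fun r => dot (u r) (v r)) p w
      = ∑ i, (fderiv ℝ (fun q => u q i) p w * v p i
            + u p i * fderiv ℝ (fun q => v q i) p w) := by
  have hui : ∀ i, DifferentiableAt ℝ (fun q => u q i) p := fun i =>
    ((contDiff_pi.1 hu i).differentiable (by simp)).differentiableAt
  have hvi : ∀ i, DifferentiableAt ℝ (fun q => v q i) p := fun i =>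
    ((contDiff_pi.1 hv i).differentiable (by simp)).differentiableAt
  have h : (fun r => dot (u r) (v r)) = fun r => ∑ i, u r i * v r i := by
    funext r; simp [dot]
  rw [h, fderiv_fun_sum (A := fun i q => u q i * v q i) (fun i _ => (hui i).mul (hvi i))]
  simp only [ContinuousLinearMap.coe_sum', Finset.sum_apply]
  refine Finset.sum_congr rfl fun i _ => ?_
  rw [fderiv_fun_mul (hui i) (hvi i)]
  simp only [ContinuousLinearMap.add_apply, ContinuousLinearMap.smul_apply, smul_eq_mul]
  ring

lemma pd_half_sq (u : Pt → V3) (hu : ContDiff ℝ (⊤ : ℕ∞) u) (p : Pt) (w : ℝ × V3) :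
    fderiv ℝ (fun q => dot (u q) (u q) / 2) p w
      = ∑ i, u p i * fderiv ℝ (fun q => u q i) p w := by
  have hd : DifferentiableAt ℝ (fun r => dot (u r) (u r)) p := by
    have hui : ∀ i, DifferentiableAt ℝ (fun q => u q i) p := fun i =>
      ((contDiff_pi.1 hu i).differentiable (by simp)).differentiableAt
    have h : (fun r => dot (u r) (u r)) = fun r => ∑ i, u r i * u r i := by
      funext r; simp [dot]
    rw [h]
    exact DifferentiableAt.fun_sum fun i _ => (hui i).mul (hui i)
  have h2 : (fun q => dot (u q) (u q) / 2)
      = fun q => (fun r => dot (u r) (u r)) q * (2⁻¹ : ℝ) := by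
    funext q; ring
  rw [h2, fderiv_mul_const hd]
  simp only [ContinuousLinearMap.smul_apply, smul_eq_mul]
  rw [pd_dot_apply u u hu hu p w]
  rw [Finset.mul_sum]
  refine Finset.sum_congr rfl fun i _ => ?_
  ring

end AuxDotSym

/-- Proposition 4: if `∂u/∂t + (u·∇)u = F`, `v` is a time-dependent symmetry
of `u` (`∂v/∂t + [u,v] = 0`), and `v·(F + ∇(|u|²/2)) = 0` everywhere, then `u·v` is a
Lagrangian invariant. -/
theorem dot_with_symmetry_invariant
    (u v F : Pt → V3)
    (hu : ContDiff ℝ (⊤ : ℕ∞) u) (hv : ContDiff ℝ (⊤ : ℕ∞) v) (hF : ContDiff ℝ (⊤ : ℕ∞) F)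
    (hdyn : ∀ p i, pdt (fun q => u q i) p + adv u u p i = F p i)
    (hsym : ∀ p i, pdt (fun q => v q i) p + brkt u v p i = 0)
    (horth : ∀ p, dot (v p) (F p)
        + ∑ j, v p j * pdx j (fun q => dot (u q) (u q) / 2) p = 0) :
    ∀ p, matD u (fun r => dot (u r) (v r)) p = 0 := by
  intro p
  have key := pd_dot_apply u v hu hv p
  have hgrad : ∀ j, pdx j (fun q => dot (u q) (u q) / 2) p
      = ∑ i, u p i * pdx j (fun q => u q i) p := fun j =>
    pd_half_sq u hu p (0, Pi.single j 1)
  have hD := fun i => hdyn p i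
  have hS := fun i => hsym p i
  have hO := horth p
  simp only [hgrad] at hO
  simp only [matD, pdt, pdx, adv, brkt, dot] at *
  simp only [key] at *
  simp only [Fin.sum_univ_three] at *
  linear_combination v p 0 * hD 0 + v p 1 * hD 1 + v p 2 * hD 2
    + u p 0 * hS 0 + u p 1 * hS 1 + u p 2 * hS 2 + hO
end
end
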